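/- Let L_k be the Markov chain on the nonnegative integers with transitions L_{k+1} = L_k + 1 with probability 1−q and L_{k+1} = max(L_k − 2, 0) with probability q (a reflecting random walk that increments by 1 or decrements by 2). If q > 1/3, then setting r = (−1 + √(1 + 4(1−q)/q))/2, one has 0 < r < 1, and the geometric distribution π_k = (1−r)·r^k for k ≥ 0 is a stationary distribution of the chain. -/

import Mathlib

/-- Transition kernel of the reflecting random walk on ℕ: from state `k` move to `k+1`
with probability `1-q` and to `max(k-2,0)` (here ℕ-subtraction `k-2`) with probability `q`. -/
noncomputable def walkP (q : ℝ) (k j : ℕ) : ℝ :=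
  (if j = k + 1 then 1 - q else 0) + (if j = k - 2 then q else 0)

/-!
Only the states `0, 1, 2` lead to `0`, and only `n` and `n + 3` lead to `n + 1`, so the balance
equations for `π k = (1 - r) r ^ k` read `q (1 + r + r²) = 1` and `r = (1 - q) + q r³`.
Both follow from `q (r² + r) = 1 - q`, of which `r` is the positive root; it is `< 1` exactly
when `q > 1/3`.
-/

open Finset

lemma walkP_zero_right (q : ℝ) (k : ℕ) : walkP q k 0 = if k ≤ 2 then q else 0 := by
  rw [walkP, if_neg (by omega), zero_add]
  split_ifs <;> first | rfl | omega

lemma walkP_succ_right (q : ℝ) (k n : ℕ) :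
    walkP q k (n + 1) = (if k = n then 1 - q else 0) + (if k = n + 3 then q else 0) := by
  unfold walkP
  congr 1 <;> split_ifs <;> first | rfl | omega

lemma tsum_mul_walkP_zero (q : ℝ) (π : ℕ → ℝ) :
    ∑' k, π k * walkP q k 0 = q * (π 0 + π 1 + π 2) := by
  rw [tsum_eq_sum (s := range 3) fun k hk => by
    have : ¬k ≤ 2 := by simp only [mem_range] at hk; omega
    simp [walkP_zero_right, this]]
  simp only [walkP_zero_right, mul_ite, mul_zero, sum_range_succ, range_one, sum_singleton,
    zero_le, ↓reduceIte, Nat.one_le_ofNat, le_refl]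
  ring

lemma tsum_mul_walkP_succ (q : ℝ) (π : ℕ → ℝ) (n : ℕ) :
    ∑' k, π k * walkP q k (n + 1) = (1 - q) * π n + q * π (n + 3) := by
  rw [tsum_eq_sum (s := {n, n + 3}) fun k hk => by
    simp only [mem_insert, mem_singleton, not_or] at hk
    simp [walkP_succ_right, hk.1, hk.2]]
  rw [sum_pair (by omega)]
  simp only [walkP_succ_right, ↓reduceIte, Nat.left_eq_add, OfNat.ofNat_ne_zero, add_zero,
    Nat.add_eq_left, zero_add]
  ring

theorem tsum_geometric_mul_walkP {q r : ℝ} (hr : q * r ^ 2 + q * r = 1 - q) (c : ℝ) (j : ℕ) :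
    ∑' k, c * r ^ k * walkP q k j = c * r ^ j := by
  cases j with
  | zero =>
    rw [tsum_mul_walkP_zero]
    linear_combination c * hr
  | succ n =>
    rw [tsum_mul_walkP_succ]
    linear_combination (-c * r ^ n * (1 - r)) * hr

noncomputable def walkRoot (q : ℝ) : ℝ := (-1 + Real.sqrt (1 + 4 * (1 - q) / q)) / 2

lemma walkRoot_quadratic {q : ℝ} (hq : 0 < q) (h1 : q ≤ 1) :
    q * walkRoot q ^ 2 + q * walkRoot q = 1 - q := by
  have h1q : 0 ≤ 1 - q := by linarith
  have hs : q * Real.sqrt (1 + 4 * (1 - q) / q) ^ 2 = q + 4 * (1 - q) := by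
    rw [Real.sq_sqrt (by positivity)]
    field_simp
  unfold walkRoot
  linear_combination hs / 4

lemma walkRoot_pos {q : ℝ} (hq : 0 < q) (h1 : q < 1) : 0 < walkRoot q := by
  have : 0 < 4 * (1 - q) / q := div_pos (by linarith) hq
  have := (Real.lt_sqrt zero_le_one).2 (show 1 ^ 2 < 1 + 4 * (1 - q) / q by linarith)
  unfold walkRoot
  linarith

lemma walkRoot_lt_one {q : ℝ} (h3 : 1 / 3 < q) : walkRoot q < 1 := by
  have hq : 0 < q := by linarith
  have : 1 + 4 * (1 - q) / q < 3 ^ 2 := by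
    rw [← sub_pos]
    field_simp
    linarith
  have := (Real.sqrt_lt' (by norm_num)).2 this
  unfold walkRoot
  linarith

theorem walk_stationary (q : ℝ) (h3 : 1 / 3 < q) (h1 : q < 1) :
    let r := (-1 + Real.sqrt (1 + 4 * (1 - q) / q)) / 2
    0 < r ∧ r < 1 ∧
      ∀ j : ℕ, (1 - r) * r ^ j = ∑' k : ℕ, (1 - r) * r ^ k * walkP q k j := by
  have hq : 0 < q := by linarith
  refine ⟨walkRoot_pos hq h1, walkRoot_lt_one h3, fun j => ?_⟩
  exact (tsum_geometric_mul_walkP (walkRoot_quadratic hq h1.le) _ j).symm
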